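/- arXiv:1208.0483 — 5 statements merged into one kernel-verified Lean document; each statement's English description precedes it below -/
import Mathlib

section
/- Let A be an affine integral domain over a field k and let φ be a non-trivial exponential map on A. Then the ring of φ-invariants A^φ is algebraically closed in A: every element of A that is algebraic over A^φ (i.e., satisfies a nonzero polynomial with coefficients in A^φ) lies in A^φ. -/
open Polynomial

/-- A `k`-algebra homomorphism `φ : A → A[U]` is an *exponential map* if evaluating `U` at `0`
gives the identity and `φ_V φ_U = φ_{V+U}` (comultiplicativity). -/
def IsExponentialMap {k A : Type*} [CommSemiring k] [CommSemiring A] [Algebra k A]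
    (φ : A →ₐ[k] A[X]) : Prop :=
  (∀ a : A, (φ a).eval 0 = a) ∧
  (∀ a : A, (φ a).map (φ : A →+* A[X]) =
      (φ a).eval₂ ((C : A[X] →+* A[X][X]).comp (C : A →+* A[X])) (C X + X))

/-- The ring of invariants `A^φ = {a ∈ A | φ(a) = a}` of a `k`-algebra map `φ : A → A[U]`,
as a subalgebra of `A`. -/
def expInv {k A : Type*} [CommSemiring k] [CommSemiring A] [Algebra k A]
    (φ : A →ₐ[k] A[X]) : Subalgebra k A where
  carrier := {a | φ a = C a}
  mul_mem' := fun {a b} ha hb => by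
    simp only [Set.mem_setOf_eq] at *
    rw [map_mul, ha, hb, ← C_mul]
  add_mem' := fun {a b} ha hb => by
    simp only [Set.mem_setOf_eq] at *
    rw [map_add, ha, hb, ← C_add]
  algebraMap_mem' := fun r => by
    simp only [Set.mem_setOf_eq, AlgHom.commutes, Polynomial.algebraMap_apply]

/-- An exponential map is non-trivial if its ring of invariants is a proper subring. -/
def IsNontrivialExpMap {k A : Type*} [CommSemiring k] [CommSemiring A] [Algebra k A]
    (φ : A →ₐ[k] A[X]) : Prop :=
  IsExponentialMap φ ∧ expInv φ ≠ ⊤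

/-- The Derksen invariant: the `k`-subalgebra of `A` generated by the invariants of all
non-trivial exponential maps on `A`. -/
def DerksenInvariant (k A : Type*) [CommSemiring k] [CommSemiring A] [Algebra k A] :
    Subalgebra k A :=
  Algebra.adjoin k {a : A | ∃ φ : A →ₐ[k] A[X], IsNontrivialExpMap φ ∧ a ∈ expInv φ}

/-- The transcendence degree of a commutative `k`-algebra `A`: the supremum of the
cardinalities of algebraically independent subsets of `A`. -/
noncomputable def trdeg (k A : Type*) [CommRing k] [CommRing A] [Algebra k A] : Cardinal :=
  ⨆ s : {s : Set A // AlgebraicIndependent k ((↑) : s → A)}, Cardinal.mk s.1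

/-- **Lemma 2.1(ii)**: the invariants of a non-trivial exponential map on an affine domain
are algebraically closed in `A`. -/
theorem expInv_algebraically_closed {k A : Type*} [Field k] [CommRing A] [IsDomain A]
    [Algebra k A] [Algebra.FiniteType k A] (φ : A →ₐ[k] A[X])
    (hφ : IsExponentialMap φ) (hnt : expInv φ ≠ ⊤)
    (a : A) (ha : IsAlgebraic (expInv φ) a) :
    a ∈ expInv φ := by
  obtain ⟨p, hp, hpa⟩ := ha
  set t : A[X] := φ a with ht
  -- map the relation through φ
  have hcoef : ∀ c : expInv φ, φ (c : A) = C (c : A) := fun c => c.2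
  set f : (expInv φ) →+* A := algebraMap (expInv φ) A with hf
  have key : Polynomial.aeval t (p.map f) = 0 := by
    have h1 : (φ : A →+* A[X]) (eval₂ f a p) = eval₂ ((φ : A →+* A[X]).comp f) t p :=
      hom_eval₂ p f (φ : A →+* A[X]) a
    have h2 : eval₂ ((φ : A →+* A[X]).comp f) t p = eval₂ (C : A →+* A[X]) t (p.map f) := by
      rw [eval₂_map]
      congr 1
      refine RingHom.ext fun c => ?_
      simp only [RingHom.coe_comp, Function.comp_apply]
      exact hcoef c
    have h3 : eval₂ f a p = 0 := hpa
    have : eval₂ (C : A →+* A[X]) t (p.map f) = 0 := by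
      rw [← h2, ← h1, h3, map_zero]
    simpa [Polynomial.aeval_def, Polynomial.algebraMap_apply] using this
  have hq : p.map f ≠ 0 := by
    refine Polynomial.map_ne_zero_iff ?_ |>.mpr hp
    exact Subtype.val_injective
  have halg : IsAlgebraic A t := ⟨p.map f, hq, key⟩
  have hdeg : t.natDegree = 0 := by
    by_contra hd
    have hlead : t.leadingCoeff ∈ nonZeroDivisors A := by
      refine mem_nonZeroDivisors_of_ne_zero ?_
      simp only [Polynomial.leadingCoeff_ne_zero]
      intro h0
      apply hd
      rw [h0]; simp
    exact (Polynomial.transcendental t hd hlead) halg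
  have : t = C (t.coeff 0) := Polynomial.eq_C_of_natDegree_eq_zero hdeg
  have heval : t.eval 0 = a := hφ.1 a
  show φ a = C a
  rw [← ht, this]
  congr 1
  rw [← heval, this]; simp
end

section
/- Let A be an affine integral domain over a field k and let φ be a non-trivial exponential map on A. Then there exists a nonzero element c ∈ A^φ such that the localization A[c^{-1}] is isomorphic, as an A^φ[c^{-1}]-algebra, to the polynomial ring in one variable over A^φ[c^{-1}]. -/
open Polynomial

/-!
Choose `s ∉ A^φ` with `n = deg φ(s)` minimal and let `c` be the leading coefficient of `φ(s)`.
Comultiplicativity says that `φ` sends the `j`-th coefficient of `φ(a)` to the `j`-th Hasse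
derivative of `φ(a)`. Hence leading coefficients are invariant, and the `j`-th coefficient of
`φ(a)` has `φ`-degree exactly `deg φ(a) - j` whenever `(deg φ(a)).choose j ≠ 0` in `A`.
Minimality of `n` forces `n.choose j = 0` for `0 < j < n`, so `(X + 1) ^ n = X ^ n + 1` and
`(n * q + r).choose r = 1` for `r < n`; therefore every `φ`-degree is a multiple of `n`.
Then `c ^ q * b - β * s ^ q` has lower degree than `b` (with `β` the leading coefficient of
`φ(b)`), which gives `c ^ m * b ∈ A^φ[s]`, while `s` is transcendental over `A^φ` because
`φ(p(s)) = p(φ(s))`. After inverting `c` these two facts make `X ↦ s` an isomorphism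
`A^φ[c⁻¹][X] ≃ A[c⁻¹]`.
-/

theorem Polynomial.hasseDeriv_map {R S : Type*} [Semiring R] [Semiring S] (f : R →+* S)
    (p : R[X]) (k : ℕ) : hasseDeriv k (p.map f) = (hasseDeriv k p).map f := by
  ext n
  simp only [hasseDeriv_coeff, coeff_map, map_mul, map_natCast]

namespace IsExponentialMap

variable {k A : Type*} [CommSemiring k] [CommSemiring A] [Algebra k A] {φ : A →ₐ[k] A[X]}

theorem map_coeff (hφ : IsExponentialMap φ) (a : A) (j : ℕ) :
    φ ((φ a).coeff j) = hasseDeriv j (φ a) := by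
  have h := congrArg (coeff · j) (hφ.2 a)
  simp only [coeff_map, AlgHom.coe_toRingHom] at h
  rw [h, ← eval₂_map, ← comp, add_comm, ← taylor_apply, taylor_coeff, hasseDeriv_map, eval_map,
    eval₂_C_X]

theorem mem_expInv_iff (hφ : IsExponentialMap φ) {a : A} :
    a ∈ expInv φ ↔ (φ a).natDegree = 0 := by
  refine ⟨fun h => by rw [show φ a = C a from h, natDegree_C], fun h => ?_⟩
  change φ a = C a
  rw [eq_C_of_natDegree_eq_zero h, coeff_zero_eq_eval_zero, hφ.1 a]

theorem natDegree_pos (hφ : IsExponentialMap φ) {a : A} (ha : a ∉ expInv φ) :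
    0 < (φ a).natDegree :=
  Nat.pos_of_ne_zero (mt hφ.mem_expInv_iff.mpr ha)

theorem map_ne_zero (hφ : IsExponentialMap φ) {a : A} (ha : a ∉ expInv φ) : φ a ≠ 0 :=
  ne_zero_of_natDegree_gt (hφ.natDegree_pos ha)

theorem leadingCoeff_mem_expInv (hφ : IsExponentialMap φ) (a : A) :
    (φ a).leadingCoeff ∈ expInv φ := by
  rw [hφ.mem_expInv_iff, leadingCoeff, hφ.map_coeff, ← Nat.le_zero]
  exact (natDegree_hasseDeriv_le _ _).trans (Nat.sub_self _).le

theorem coeff_map_coeff (hφ : IsExponentialMap φ) (a : A) {j : ℕ} (hj : j ≤ (φ a).natDegree) :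
    (φ ((φ a).coeff j)).coeff ((φ a).natDegree - j) =
      ((φ a).natDegree.choose j : A) * (φ a).leadingCoeff := by
  rw [hφ.map_coeff, hasseDeriv_coeff, Nat.sub_add_cancel hj, leadingCoeff]

theorem natDegree_map_coeff [NoZeroDivisors A] (hφ : IsExponentialMap φ) (a : A) {j : ℕ}
    (hj : j ≤ (φ a).natDegree) (hchoose : ((φ a).natDegree.choose j : A) ≠ 0) :
    (φ ((φ a).coeff j)).natDegree = (φ a).natDegree - j := by
  by_cases hφa : φ a = 0
  · simp [hφa]
  refine natDegree_eq_of_le_of_coeff_ne_zero ?_ ?_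
  · rw [hφ.map_coeff]; exact natDegree_hasseDeriv_le _ _
  · rw [hφ.coeff_map_coeff a hj]
    exact mul_ne_zero hchoose (leadingCoeff_ne_zero.mpr hφa)

end IsExponentialMap

namespace Polynomial

theorem X_add_one_pow_eq_X_pow_add_one {R : Type*} [Semiring R] {n : ℕ} (hn0 : n ≠ 0)
    (hn : ∀ j, 0 < j → j < n → (n.choose j : R) = 0) : (X + 1 : R[X]) ^ n = X ^ n + 1 := by
  ext j
  rw [coeff_X_add_one_pow, coeff_add, coeff_X_pow, coeff_one]
  rcases Nat.eq_zero_or_pos j with rfl | hj0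
  · simp [Ne.symm hn0]
  rcases lt_trichotomy j n with hjn | rfl | hjn
  · simp [hn j hj0 hjn, hjn.ne, hj0.ne']
  · simp [hn0]
  · simp [Nat.choose_eq_zero_of_lt hjn, hjn.ne', hj0.ne']

/-- Once `(X + 1) ^ n = X ^ n + 1`, the factor `(X + 1) ^ (n * q)` of `(X + 1) ^ (n * q + r)`
is `1` modulo `X ^ n`, so it does not affect coefficients below `n`. -/
theorem cast_choose_mul_add_eq_one {R : Type*} [CommRing R] {n : ℕ}
    (hn : ∀ j, 0 < j → j < n → (n.choose j : R) = 0) (q : ℕ) {r : ℕ} (hr : r < n) :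
    ((n * q + r).choose r : R) = 1 := by
  obtain ⟨h, hh⟩ : X ^ n ∣ (X ^ n + 1 : R[X]) ^ q - 1 := by
    have h := sub_dvd_pow_sub_pow (X ^ n + 1 : R[X]) 1 q
    rwa [add_sub_cancel_right, one_pow] at h
  have hpow : (X + 1 : R[X]) ^ (n * q + r) = (X + 1) ^ r + X ^ n * (h * (X + 1) ^ r) := by
    rw [pow_add, pow_mul, X_add_one_pow_eq_X_pow_add_one (by omega) hn, sub_eq_iff_eq_add.mp hh]
    ring
  simpa [coeff_X_add_one_pow, coeff_X_pow_mul', hr.not_ge] using congrArg (coeff · r) hpow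

theorem natDegree_sub_lt_of_leadingCoeff_eq {R : Type*} [Ring R] {p q : R[X]}
    (hd : p.natDegree = q.natDegree) (hp : 0 < p.natDegree)
    (hlc : p.leadingCoeff = q.leadingCoeff) : (p - q).natDegree < p.natDegree := by
  have hp0 : p ≠ 0 := ne_zero_of_natDegree_gt hp
  have hq0 : q ≠ 0 := ne_zero_of_natDegree_gt (hd ▸ hp)
  by_cases hpq : p - q = 0
  · rwa [hpq, natDegree_zero]
  refine natDegree_lt_natDegree hpq (degree_sub_lt_left ?_ hp0 hlc)
  rw [degree_eq_natDegree hp0, degree_eq_natDegree hq0, hd]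

end Polynomial

namespace IsExponentialMap

variable {k A : Type*} [CommRing k] [CommRing A] [IsDomain A] [Algebra k A]
  {φ : A →ₐ[k] A[X]} (hφ : IsExponentialMap φ)
include hφ

theorem transcendental_of_notMem_expInv {s : A} (hs : s ∉ expInv φ) :
    Transcendental (expInv φ) s := by
  have hcomp : ∀ p : (expInv φ)[X], φ (aeval s p) = (p.map (expInv φ).val).comp (φ s) := by
    intro p
    induction p using Polynomial.induction_on with
    | C a => simpa using (show φ a = C (a : A) from a.2)
    | add p q hp hq => simp only [map_add, Polynomial.map_add, add_comp, hp, hq]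
    | monomial n a _ => simp [show φ a = C (a : A) from a.2]
  refine transcendental_iff.mpr fun p hp => ?_
  have hφs : φ s ≠ C ((φ s).coeff 0) := fun h => hs (by rw [hφ.mem_expInv_iff, h, natDegree_C])
  have h0 := hcomp p
  rw [hp, map_zero, eq_comm, comp_eq_zero_iff] at h0
  rcases h0 with h0 | h0
  · exact (Polynomial.map_eq_zero_iff Subtype.val_injective).mp h0
  · exact absurd h0.2 hφs

theorem natDegree_leadingCoeff_pow_mul_sub_lt {s b : A} (hs : s ∉ expInv φ) (hb : b ∉ expInv φ)
    {q : ℕ} (hq : (φ b).natDegree = (φ s).natDegree * q) :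
    (φ ((φ s).leadingCoeff ^ q * b - (φ b).leadingCoeff * s ^ q)).natDegree < (φ b).natDegree := by
  have hcq : (φ s).leadingCoeff ^ q ≠ 0 :=
    pow_ne_zero q (leadingCoeff_ne_zero.mpr (hφ.map_ne_zero hs))
  have hβ : (φ b).leadingCoeff ≠ 0 := leadingCoeff_ne_zero.mpr (hφ.map_ne_zero hb)
  have hc : φ (φ s).leadingCoeff = C (φ s).leadingCoeff := hφ.leadingCoeff_mem_expInv s
  have hβ' : φ (φ b).leadingCoeff = C (φ b).leadingCoeff := hφ.leadingCoeff_mem_expInv b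
  rw [map_sub, map_mul, map_mul, map_pow, map_pow, hc, ← C_pow, hβ',
    ← natDegree_C_mul (p := φ b) hcq]
  refine natDegree_sub_lt_of_leadingCoeff_eq ?_ ?_ ?_
  · rw [natDegree_C_mul hcq, natDegree_C_mul hβ, natDegree_pow, hq, mul_comm]
  · rw [natDegree_C_mul hcq]
    exact hφ.natDegree_pos hb
  · simp only [leadingCoeff_mul, leadingCoeff_C, leadingCoeff_pow, mul_comm]

variable {s : A} (hmin : ∀ b ∉ expInv φ, (φ s).natDegree ≤ (φ b).natDegree)
include hmin

theorem cast_choose_eq_zero_of_minimal (j : ℕ) (hj0 : 0 < j) (hjn : j < (φ s).natDegree) :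
    ((φ s).natDegree.choose j : A) = 0 := by
  by_contra hchoose
  have hdeg := hφ.natDegree_map_coeff s hjn.le hchoose
  have := hmin _ (by rw [hφ.mem_expInv_iff, hdeg]; omega)
  omega

/-- The `φ`-degree of `(φ b).coeff (d - r)`, where `r = d % n`, is exactly `r`; minimality of
`n` forces `r = 0`. -/
theorem natDegree_dvd_of_minimal (hs : s ∉ expInv φ) (b : A) :
    (φ s).natDegree ∣ (φ b).natDegree := by
  set n := (φ s).natDegree
  set d := (φ b).natDegree
  have hn : 0 < n := hφ.natDegree_pos hs
  have hchoose : (d.choose (d - d % n) : A) = 1 := by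
    have h := cast_choose_mul_add_eq_one (hφ.cast_choose_eq_zero_of_minimal hmin) (d / n)
      (Nat.mod_lt d hn)
    rwa [Nat.div_add_mod, ← Nat.choose_symm (Nat.mod_le d n)] at h
  have hdeg := hφ.natDegree_map_coeff b (Nat.sub_le d (d % n)) (by rw [hchoose]; exact one_ne_zero)
  have hr_le := Nat.mod_le d n
  have hr_lt := Nat.mod_lt d hn
  rw [Nat.dvd_iff_mod_eq_zero]
  by_contra hr
  have := hmin _ (by rw [hφ.mem_expInv_iff, hdeg]; omega)
  omega

theorem exists_pow_mul_mem_adjoin_of_minimal (hs : s ∉ expInv φ) (b : A) :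
    ∃ m : ℕ, (φ s).leadingCoeff ^ m * b ∈ Algebra.adjoin (expInv φ) {s} := by
  set c := (φ s).leadingCoeff
  have hc : c ∈ expInv φ := hφ.leadingCoeff_mem_expInv s
  induction hd : (φ b).natDegree using Nat.strong_induction_on generalizing b with
  | _ d ih =>
  by_cases hb : b ∈ expInv φ
  · exact ⟨0, by simpa using (Algebra.adjoin (expInv φ) {s}).algebraMap_mem ⟨b, hb⟩⟩
  obtain ⟨q, hq⟩ := hφ.natDegree_dvd_of_minimal hmin hs b
  set β := (φ b).leadingCoeff
  have hβ : β ∈ expInv φ := hφ.leadingCoeff_mem_expInv b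
  have hdrop := hφ.natDegree_leadingCoeff_pow_mul_sub_lt hs hb hq
  rw [hd] at hdrop
  obtain ⟨m, hm⟩ := ih _ hdrop _ rfl
  refine ⟨m + q, ?_⟩
  rw [show c ^ (m + q) * b = c ^ m * (c ^ q * b - β * s ^ q) + c ^ m * β * s ^ q by ring]
  refine add_mem hm (mul_mem ?_ (pow_mem (Algebra.self_mem_adjoin_singleton (expInv φ) s) q))
  exact (Algebra.adjoin (expInv φ) {s}).algebraMap_mem ⟨c ^ m * β, mul_mem (pow_mem hc m) hβ⟩

end IsExponentialMap

theorem Transcendental.isStronglyTranscendental {R A : Type*} [CommRing R] [CommRing A]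
    [IsDomain A] [Algebra R A] {x : A} (h : Transcendental R x) : IsStronglyTranscendental R x := by
  intro u p hp
  rcases mul_eq_zero.mp hp with hp | hu
  · rw [transcendental_iff.mp h p hp, Polynomial.map_zero, zero_mul]
  · rw [hu, C_0, mul_zero]

section Localization

variable {R A Rc Ac : Type*} [CommRing R] [CommRing A] [Algebra R A] [CommRing Rc] [CommRing Ac]
  [Algebra R Rc] [Algebra A Ac] [Algebra Rc Ac] [Algebra R Ac]
  [IsScalarTower R Rc Ac] [IsScalarTower R A Ac]
  (c : R) [IsLocalization.Away c Rc] [IsLocalization.Away (algebraMap R A c) Ac] {s : A}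

theorem aeval_algebraMap_surjective_of_pow_mul_mem_adjoin
    (h : ∀ b : A, ∃ m : ℕ, algebraMap R A c ^ m * b ∈ Algebra.adjoin R {s}) :
    Function.Surjective (aeval (algebraMap A Ac s) : Rc[X] →ₐ[Rc] Ac) := by
  intro x
  rw [← AlgHom.mem_range, ← Algebra.adjoin_singleton_eq_range_aeval]
  set S := Algebra.adjoin Rc {algebraMap A Ac s}
  have hS : Algebra.adjoin R {s} ≤ (S.restrictScalars R).comap (IsScalarTower.toAlgHom R A Ac) :=
    Algebra.adjoin_le (by simp [S, Algebra.self_mem_adjoin_singleton])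
  obtain ⟨⟨b, _, k, rfl⟩, hx⟩ := IsLocalization.surj (Submonoid.powers (algebraMap R A c)) x
  obtain ⟨m, hm⟩ := h b
  obtain ⟨u, hu⟩ := (IsLocalization.Away.algebraMap_isUnit (S := Rc) c).pow (m + k)
  have hxu : x * algebraMap Rc Ac u = algebraMap A Ac (algebraMap R A c ^ m * b) := by
    simp only at hx
    rw [hu, map_pow, ← IsScalarTower.algebraMap_apply, IsScalarTower.algebraMap_apply R A Ac,
      map_mul, ← hx, map_pow, map_pow, pow_add]
    ring
  rw [← mul_one x, ← map_one (algebraMap Rc Ac), ← u.mul_inv, map_mul, ← mul_assoc, hxu]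
  exact mul_mem (hS hm) (S.algebraMap_mem _)

theorem aeval_algebraMap_injective_of_transcendental [IsDomain A] [FaithfulSMul R A]
    (hc : algebraMap R A c ≠ 0) (hs : Transcendental R s) :
    Function.Injective (aeval (algebraMap A Ac s) : Rc[X] →ₐ[Rc] Ac) := by
  have hinj : Function.Injective (algebraMap R Ac) := by
    rw [IsScalarTower.algebraMap_eq R A Ac]
    exact (IsLocalization.injective Ac (powers_le_nonZeroDivisors_of_noZeroDivisors hc)).comp
      (FaithfulSMul.algebraMap_injective R A)
  have : FaithfulSMul Rc Ac := by
    rw [faithfulSMul_iff_algebraMap_injective, injective_iff_map_eq_zero]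
    intro r hr
    obtain ⟨⟨a, t⟩, ht⟩ := IsLocalization.surj (Submonoid.powers c) r
    have ha : algebraMap R Ac a = 0 := by
      rw [IsScalarTower.algebraMap_apply R Rc Ac, ← ht, map_mul, hr, zero_mul]
    rw [(injective_iff_map_eq_zero _).mp hinj a ha, map_zero] at ht
    exact (IsLocalization.map_units Rc t).mul_left_eq_zero.mp ht
  have hst : IsStronglyTranscendental Rc (algebraMap A Ac s) :=
    (hs.isStronglyTranscendental.of_isLocalization
      (Submonoid.powers (algebraMap R A c))).of_isLocalization_left (Submonoid.powers c)
  exact transcendental_iff_injective.mp hst.transcendental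

end Localization

theorem expInv_localization_polynomial_general {k A : Type*} [Field k] [CommRing A] [IsDomain A]
    [Algebra k A] (φ : A →ₐ[k] A[X])
    (hφ : IsExponentialMap φ) (hnt : expInv φ ≠ ⊤) :
    ∃ c : expInv φ, (c : A) ≠ 0 ∧
      ∀ (Rc Ac : Type) [CommRing Rc] [CommRing Ac]
        [Algebra (expInv φ) Rc] [IsLocalization.Away c Rc]
        [Algebra A Ac] [IsLocalization.Away (c : A) Ac]
        [Algebra Rc Ac] [Algebra (expInv φ) Ac]
        [IsScalarTower (expInv φ) Rc Ac] [IsScalarTower (expInv φ) A Ac],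
        Nonempty (Ac ≃ₐ[Rc] Polynomial Rc) := by
  obtain ⟨b, hb⟩ : ∃ b, b ∉ expInv φ := by
    by_contra! h
    exact hnt (eq_top_iff.mpr fun b _ => h b)
  obtain ⟨s, hs, hmin⟩ :=
    (measure fun b => (φ b).natDegree).wf.has_min {b | b ∉ expInv φ} ⟨b, hb⟩
  replace hmin : ∀ b ∉ expInv φ, (φ s).natDegree ≤ (φ b).natDegree :=
    fun b hb => not_lt.mp (hmin b hb)
  have hc : (φ s).leadingCoeff ≠ 0 := leadingCoeff_ne_zero.mpr (hφ.map_ne_zero hs)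
  set c : expInv φ := ⟨_, hφ.leadingCoeff_mem_expInv s⟩
  refine ⟨c, hc, ?_⟩
  intro Rc Ac _ _ _ _ _ hAc _ hAlg _ _
  -- The scalar towers of the statement concern the action of `expInv φ` on `Ac` through `A`,
  -- not `hAlg`; clearing `hAlg` lets instance search find that action.
  clear hAlg
  have : IsLocalization.Away (algebraMap (expInv φ) A c) Ac := hAc
  have hinj := aeval_algebraMap_injective_of_transcendental (Rc := Rc) (Ac := Ac) c hc
    (hφ.transcendental_of_notMem_expInv hs)
  have hsurj := aeval_algebraMap_surjective_of_pow_mul_mem_adjoin (Rc := Rc) (Ac := Ac) c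
    (hφ.exists_pow_mul_mem_adjoin_of_minimal hmin hs)
  exact ⟨(AlgEquiv.ofBijective _ ⟨hinj, hsurj⟩).symm⟩

/-- **Lemma 2.1(iv)**: for a non-trivial exponential map `φ` on an affine domain `A` over `k`,
there is a nonzero invariant `c` such that `A[c⁻¹]` is a polynomial ring in one variable
over `A^φ[c⁻¹]`.  Here `A^φ[c⁻¹]` and `A[c⁻¹]` are formalized as arbitrary localizations
`Rc` of `A^φ` at `c` and `Ac` of `A` at `c`, with `Ac` an `Rc`-algebra compatibly with the
inclusion `A^φ ⊆ A`. -/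
theorem expInv_localization_polynomial {k A : Type*} [Field k] [CommRing A] [IsDomain A]
    [Algebra k A] [Algebra.FiniteType k A] (φ : A →ₐ[k] A[X])
    (hφ : IsExponentialMap φ) (hnt : expInv φ ≠ ⊤) :
    ∃ c : expInv φ, (c : A) ≠ 0 ∧
      ∀ (Rc Ac : Type) [CommRing Rc] [CommRing Ac]
        [Algebra (expInv φ) Rc] [IsLocalization.Away c Rc]
        [Algebra A Ac] [IsLocalization.Away (c : A) Ac]
        [Algebra Rc Ac] [Algebra (expInv φ) Ac]
        [IsScalarTower (expInv φ) Rc Ac] [IsScalarTower (expInv φ) A Ac],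
        Nonempty (Ac ≃ₐ[Rc] Polynomial Rc) :=
  expInv_localization_polynomial_general φ hφ hnt
end

section
/- Let A be an affine integral domain over a field k equipped with a proper Z-filtration {A_n} that is admissible, and let φ be a non-trivial exponential map on A. Then φ induces a non-trivial exponential map φ̄ on the associated graded ring gr(A) = ⊕_n A_n/A_{n-1} such that ρ(A^φ) ⊆ gr(A)^{φ̄}, where ρ : A → gr(A) sends a ∈ A_n \ A_{n-1} to its class a + A_{n-1}. -/
open Polynomial

/-!
Give the variable `U` the weight `-e`, where `e` is the largest slope
`(deg (φ γ)ᵢ - deg γ) / i` over the generators `γ ∈ Γ` and the nonzero coefficients of `φ γ`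
with `i ≠ 0`. Admissibility propagates the bound `deg (φ a)ᵢ ≤ deg a + e i` from `Γ` to all
of `A`, so `φ` is a filtered map. Keeping in each coefficient only its component of degree
`deg a + e i` defines `φ̄` on `gr(A)`; multiplicativity and the exponential identities pass to
these leading forms, invariants of `φ` are sent to constants, and a generator realizing the
maximal slope has a nonzero leading coefficient, so `φ̄` is non-trivial.
-/

theorem coeff_coeff_eval₂_C_X_add_X {R : Type*} [CommSemiring R] (q : R[X]) (i j : ℕ) :
    ((q.eval₂ ((C : R[X] →+* R[X][X]).comp C) (C X + X)).coeff i).coeff j =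
      (i + j).choose i • q.coeff (i + j) := by
  have htaylor : q.eval₂ ((C : R[X] →+* R[X][X]).comp C) (C X + X) = taylor X (q.map C) := by
    rw [taylor_apply, comp, eval₂_map, add_comm]
  have hmap : hasseDeriv i (q.map C) = (hasseDeriv i q).map C := by
    ext1 n
    simp only [hasseDeriv_coeff, coeff_map, map_mul, map_natCast]
  rw [htaylor, taylor_coeff, hmap, eval_map, eval₂_C_X, hasseDeriv_coeff, add_comm j,
    nsmul_eq_mul]

theorem isExponentialMap_iff_coeff {k A : Type*} [CommSemiring k] [CommSemiring A] [Algebra k A]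
    (φ : A →ₐ[k] A[X]) :
    IsExponentialMap φ ↔ (∀ a, (φ a).coeff 0 = a) ∧
      ∀ a (i j : ℕ), (φ ((φ a).coeff i)).coeff j = (i + j).choose i • (φ a).coeff (i + j) := by
  simp only [IsExponentialMap, coeff_zero_eq_eval_zero, Polynomial.ext_iff, coeff_map,
    coeff_coeff_eval₂_C_X_add_X, RingHom.coe_coe]

structure IsProperFiltration {k A : Type*} [CommSemiring k] [CommRing A] [Algebra k A]
    (F : ℤ → Submodule k A) : Prop where
  le_succ : ∀ n : ℤ, F n ≤ F (n + 1)
  exists_mem : ∀ a : A, ∃ n : ℤ, a ∈ F n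
  eq_zero_of_forall_mem : ∀ a : A, (∀ n : ℤ, a ∈ F n) → a = 0
  mul_mem_sdiff : ∀ {n m : ℤ} {a b : A}, a ∈ F n → a ∉ F (n - 1) → b ∈ F m → b ∉ F (m - 1) →
    a * b ∈ F (n + m) ∧ a * b ∉ F (n + m - 1)

/-- Junk value `0` at `a = 0`, where `{n | a ∈ F n}` is all of `ℤ`. -/
noncomputable def filtrationDeg {k A : Type*} [CommSemiring k] [CommRing A] [Algebra k A]
    (F : ℤ → Submodule k A) (a : A) : ℤ :=
  sInf {n | a ∈ F n}

namespace IsProperFiltration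

variable {k A : Type*} [CommSemiring k] [CommRing A] [Algebra k A] {F : ℤ → Submodule k A}
  (hF : IsProperFiltration F)
include hF

theorem monotone : Monotone F :=
  monotone_int_of_le_succ hF.le_succ

theorem mem_iff_filtrationDeg_le {a : A} (ha : a ≠ 0) {n : ℤ} :
    a ∈ F n ↔ filtrationDeg F a ≤ n := by
  obtain ⟨m, hm⟩ : ∃ m, a ∉ F m := by
    by_contra! h
    exact ha (hF.eq_zero_of_forall_mem a h)
  have hbdd : BddBelow {n | a ∈ F n} :=
    ⟨m, fun n hn => le_of_not_gt fun hnm => hm (hF.monotone hnm.le hn)⟩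
  refine ⟨fun h => csInf_le hbdd h, fun h => hF.monotone h ?_⟩
  exact Int.csInf_mem (hF.exists_mem a) hbdd

theorem mem_filtrationDeg (a : A) : a ∈ F (filtrationDeg F a) := by
  by_cases ha : a = 0
  · exact ha ▸ zero_mem _
  · exact (hF.mem_iff_filtrationDeg_le ha).2 le_rfl

theorem notMem_filtrationDeg_sub_one {a : A} (ha : a ≠ 0) : a ∉ F (filtrationDeg F a - 1) := by
  rw [hF.mem_iff_filtrationDeg_le ha]
  omega

theorem filtrationDeg_eq {a : A} {n : ℤ} (h : a ∈ F n) (h' : a ∉ F (n - 1)) :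
    filtrationDeg F a = n := by
  have ha : a ≠ 0 := by rintro rfl; exact h' (zero_mem _)
  rw [hF.mem_iff_filtrationDeg_le ha] at h h'
  omega

theorem filtrationDeg_mul {a b : A} (ha : a ≠ 0) (hb : b ≠ 0) :
    filtrationDeg F (a * b) = filtrationDeg F a + filtrationDeg F b := by
  obtain ⟨hmem, hnotMem⟩ := hF.mul_mem_sdiff (hF.mem_filtrationDeg a)
    (hF.notMem_filtrationDeg_sub_one ha) (hF.mem_filtrationDeg b)
    (hF.notMem_filtrationDeg_sub_one hb)
  exact hF.filtrationDeg_eq hmem hnotMem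

theorem mul_ne_zero {a b : A} (ha : a ≠ 0) (hb : b ≠ 0) : a * b ≠ 0 := by
  intro h
  refine (hF.mul_mem_sdiff (hF.mem_filtrationDeg a) (hF.notMem_filtrationDeg_sub_one ha)
    (hF.mem_filtrationDeg b) (hF.notMem_filtrationDeg_sub_one hb)).2 ?_
  exact h ▸ zero_mem _

theorem mul_mem {a b : A} {n m : ℤ} (ha : a ∈ F n) (hb : b ∈ F m) : a * b ∈ F (n + m) := by
  by_cases ha0 : a = 0
  · simp [ha0]
  by_cases hb0 : b = 0
  · simp [hb0]
  rw [hF.mem_iff_filtrationDeg_le (hF.mul_ne_zero ha0 hb0), hF.filtrationDeg_mul ha0 hb0]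
  exact add_le_add ((hF.mem_iff_filtrationDeg_le ha0).1 ha) ((hF.mem_iff_filtrationDeg_le hb0).1 hb)

theorem one_mem : (1 : A) ∈ F 0 := by
  by_cases h : (1 : A) = 0
  · exact h ▸ zero_mem _
  have h1 := hF.filtrationDeg_mul h h
  rw [one_mul] at h1
  simpa [show filtrationDeg F (1 : A) = 0 by omega] using hF.mem_filtrationDeg 1

end IsProperFiltration

namespace DirectSum.IsInternal

variable {ι R M : Type*} {P : ι → Type*} [DecidableEq ι]

theorem induction_on_range [Semiring R] [AddCommMonoid M] [Module R M]
    [∀ i, AddCommMonoid (P i)] [∀ i, Module R (P i)] {π : ∀ i, P i →ₗ[R] M}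
    (hπ : DirectSum.IsInternal fun i => LinearMap.range (π i))
    {motive : M → Prop} (zero : motive 0) (add : ∀ x y, motive x → motive y → motive (x + y))
    (image : ∀ i a, motive (π i a)) (x : M) : motive x := by
  have hx : x ∈ ⨆ i, LinearMap.range (π i) := hπ.submodule_iSup_eq_top ▸ Submodule.mem_top
  refine Submodule.iSup_induction (motive := motive) _ hx ?_ zero add
  rintro i _ ⟨a, rfl⟩
  exact image i a

theorem exists_linearMap_comp_eq {N : Type*} [Ring R] [AddCommGroup M] [Module R M]
    [AddCommGroup N] [Module R N] [∀ i, AddCommGroup (P i)] [∀ i, Module R (P i)]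
    {π : ∀ i, P i →ₗ[R] M} (hπ : DirectSum.IsInternal fun i => LinearMap.range (π i))
    (L : ∀ i, P i →ₗ[R] N) (hL : ∀ i, LinearMap.ker (π i) ≤ LinearMap.ker (L i)) :
    ∃ f : M →ₗ[R] N, ∀ i a, f (π i a) = L i a := by
  let L' : ∀ i, LinearMap.range (π i) →ₗ[R] N := fun i =>
    (LinearMap.ker (π i)).liftQ (L i) (hL i) ∘ₗ (π i).quotKerEquivRange.symm.toLinearMap
  refine ⟨DirectSum.toModule R ι N L' ∘ₗ
    (LinearEquiv.ofBijective (DirectSum.coeLinearMap _) hπ).symm.toLinearMap, fun i a => ?_⟩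
  have hdecomp : (LinearEquiv.ofBijective (DirectSum.coeLinearMap _) hπ).symm (π i a) =
      DirectSum.lof R ι _ i ⟨π i a, LinearMap.mem_range_self _ a⟩ := by
    rw [LinearEquiv.symm_apply_eq]
    exact (DirectSum.coeLinearMap_lof (R := R) _ i ⟨π i a, LinearMap.mem_range_self _ a⟩).symm
  simp [L', hdecomp]

end DirectSum.IsInternal

structure IsAssociatedGraded {k A G : Type*} [CommSemiring k] [CommRing A] [Algebra k A]
    [CommRing G] [Algebra k G] (F : ℤ → Submodule k A) (π : ∀ n : ℤ, F n →ₗ[k] G) : Prop where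
  map_eq_zero_iff : ∀ (n : ℤ) (a : F n), π n a = 0 ↔ (a : A) ∈ F (n - 1)
  isInternal : DirectSum.IsInternal fun n : ℤ => LinearMap.range (π n)
  map_one : ∀ h1 : (1 : A) ∈ F 0, π 0 ⟨1, h1⟩ = 1
  map_mul : ∀ (n m : ℤ) (a : F n) (b : F m) (hab : (a : A) * (b : A) ∈ F (n + m)),
    π (n + m) ⟨(a : A) * (b : A), hab⟩ = π n a * π m b

open scoped Classical in
/-- The class of `x` in `F n / F (n - 1) ⊆ G` (the paper's `ρ x` when `n` is the degree of `x`),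
extended by `0` off `F n`. -/
noncomputable def gradedPart {k A G : Type*} [CommSemiring k] [CommRing A] [Algebra k A]
    [CommRing G] [Algebra k G] (F : ℤ → Submodule k A) (π : ∀ n : ℤ, F n →ₗ[k] G) (n : ℤ)
    (x : A) : G :=
  if h : x ∈ F n then π n ⟨x, h⟩ else 0

section gradedPart

variable {k A G : Type*} [CommSemiring k] [CommRing A] [Algebra k A] [CommRing G] [Algebra k G]
  {F : ℤ → Submodule k A} {π : ∀ n : ℤ, F n →ₗ[k] G} {n m : ℤ} {x y : A}

theorem gradedPart_of_mem (h : x ∈ F n) : gradedPart F π n x = π n ⟨x, h⟩ :=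
  dif_pos h

theorem gradedPart_zero : gradedPart F π n 0 = 0 := by
  rw [gradedPart_of_mem (zero_mem _)]
  exact map_zero _

theorem gradedPart_add (hx : x ∈ F n) (hy : y ∈ F n) :
    gradedPart F π n (x + y) = gradedPart F π n x + gradedPart F π n y := by
  rw [gradedPart_of_mem hx, gradedPart_of_mem hy, gradedPart_of_mem (add_mem hx hy), ← map_add]
  rfl

theorem gradedPart_smul (c : k) (hx : x ∈ F n) :
    gradedPart F π n (c • x) = c • gradedPart F π n x := by
  rw [gradedPart_of_mem hx, gradedPart_of_mem (Submodule.smul_mem _ c hx), ← map_smul]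
  rfl

theorem gradedPart_nsmul (c : ℕ) (hx : x ∈ F n) :
    gradedPart F π n (c • x) = c • gradedPart F π n x := by
  rw [← Nat.cast_smul_eq_nsmul k, gradedPart_smul _ hx, Nat.cast_smul_eq_nsmul]

theorem gradedPart_sum {ι : Type*} (s : Finset ι) (f : ι → A) (hf : ∀ i ∈ s, f i ∈ F n) :
    gradedPart F π n (∑ i ∈ s, f i) = ∑ i ∈ s, gradedPart F π n (f i) := by
  classical
  induction s using Finset.induction_on with
  | empty => exact gradedPart_zero
  | insert i s hi ih =>
    have hs : ∀ j ∈ s, f j ∈ F n := fun j hj => hf j (Finset.mem_insert_of_mem hj)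
    rw [Finset.sum_insert hi, Finset.sum_insert hi,
      gradedPart_add (hf i (Finset.mem_insert_self i s)) (sum_mem hs), ih hs]

theorem gradedPart_eq_zero_of_mem_sub_one (hF : IsProperFiltration F)
    (hπ : IsAssociatedGraded F π) (h : x ∈ F (n - 1)) : gradedPart F π n x = 0 := by
  have hx : x ∈ F n := hF.monotone (by omega) h
  rw [gradedPart_of_mem hx]
  exact (hπ.map_eq_zero_iff n ⟨x, hx⟩).2 h

theorem gradedPart_ne_zero (hπ : IsAssociatedGraded F π) (h : x ∈ F n) (h' : x ∉ F (n - 1)) :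
    gradedPart F π n x ≠ 0 := by
  rw [gradedPart_of_mem h]
  exact fun h0 => h' ((hπ.map_eq_zero_iff n ⟨x, h⟩).1 h0)

theorem gradedPart_mul (hF : IsProperFiltration F) (hπ : IsAssociatedGraded F π)
    (hx : x ∈ F n) (hy : y ∈ F m) :
    gradedPart F π (n + m) (x * y) = gradedPart F π n x * gradedPart F π m y := by
  by_cases hx' : x ∈ F (n - 1)
  · have hxy : x * y ∈ F (n + m - 1) := by simpa [sub_add_eq_add_sub] using hF.mul_mem hx' hy
    rw [gradedPart_eq_zero_of_mem_sub_one hF hπ hx', zero_mul,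
      gradedPart_eq_zero_of_mem_sub_one hF hπ hxy]
  by_cases hy' : y ∈ F (m - 1)
  · have hxy : x * y ∈ F (n + m - 1) := by simpa [add_sub_assoc] using hF.mul_mem hx hy'
    rw [gradedPart_eq_zero_of_mem_sub_one hF hπ hy', mul_zero,
      gradedPart_eq_zero_of_mem_sub_one hF hπ hxy]
  rw [gradedPart_of_mem hx, gradedPart_of_mem hy, gradedPart_of_mem (hF.mul_mem hx hy)]
  exact hπ.map_mul n m ⟨x, hx⟩ ⟨y, hy⟩ _

theorem gradedPart_ceil_eq_zero (hF : IsProperFiltration F) (hπ : IsAssociatedGraded F π)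
    {r : ℚ} (hx : x ∈ F m) (hr : (m : ℚ) < r) :
    gradedPart F π ⌈r⌉ x = 0 :=
  gradedPart_eq_zero_of_mem_sub_one hF hπ (hF.monotone (by have := Int.lt_ceil.2 hr; omega) hx)

theorem gradedPart_ceil_add_mul (hF : IsProperFiltration F) (hπ : IsAssociatedGraded F π)
    {q r : ℚ} (hx : x ∈ F ⌊q⌋) (hy : y ∈ F ⌊r⌋) :
    gradedPart F π ⌈q + r⌉ (x * y) = gradedPart F π ⌈q⌉ x * gradedPart F π ⌈r⌉ y := by
  by_cases hint : (⌊q⌋ : ℚ) = q ∧ (⌊r⌋ : ℚ) = r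
  · obtain ⟨hq, hr⟩ := hint
    rw [← hq, ← hr, ← Int.cast_add, Int.ceil_intCast, Int.ceil_intCast, Int.ceil_intCast]
    exact gradedPart_mul hF hπ hx hy
  have hxy := hF.mul_mem hx hy
  rcases not_and_or.1 hint with hq | hr
  · have hq' := lt_of_le_of_ne (Int.floor_le q) hq
    rw [gradedPart_ceil_eq_zero hF hπ hx hq', zero_mul]
    exact gradedPart_ceil_eq_zero hF hπ hxy (by push_cast; linarith [Int.floor_le r])
  · have hr' := lt_of_le_of_ne (Int.floor_le r) hr
    rw [gradedPart_ceil_eq_zero hF hπ hy hr', mul_zero]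
    exact gradedPart_ceil_eq_zero hF hπ hxy (by push_cast; linarith [Int.floor_le q])

end gradedPart

theorem exists_max_slope {A : Type*} [Semiring A] (d : A → ℤ) (f : A → A[X]) (Γ : Finset A)
    (hΓ : ∃ γ ∈ Γ, ∃ i ≠ 0, (f γ).coeff i ≠ 0) :
    ∃ e : ℚ, (∀ γ ∈ Γ, ∀ i ≠ 0, (f γ).coeff i ≠ 0 → (d ((f γ).coeff i) : ℚ) ≤ d γ + e * i) ∧
      ∃ γ ∈ Γ, ∃ i ≠ 0, (f γ).coeff i ≠ 0 ∧ (d ((f γ).coeff i) : ℚ) = d γ + e * i := by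
  classical
  let S : Finset (A × ℕ) := Γ.biUnion fun γ => ((f γ).support.erase 0).image (γ, ·)
  have hS : ∀ γ i, (γ, i) ∈ S ↔ γ ∈ Γ ∧ i ≠ 0 ∧ (f γ).coeff i ≠ 0 := by
    simp [S, and_comm]
  let slope : A × ℕ → ℚ := fun x => ((d ((f x.1).coeff x.2) : ℚ) - d x.1) / x.2
  obtain ⟨γ, hγ, i, hi, hc⟩ := hΓ
  obtain ⟨⟨γ₀, i₀⟩, hmem, hmax⟩ :=
    S.exists_max_image slope ⟨(γ, i), (hS γ i).2 ⟨hγ, hi, hc⟩⟩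
  obtain ⟨hγ₀, hi₀, hc₀⟩ := (hS γ₀ i₀).1 hmem
  refine ⟨slope (γ₀, i₀), fun γ hγ i hi hc => ?_, γ₀, hγ₀, i₀, hi₀, hc₀, ?_⟩
  · have hle := hmax (γ, i) ((hS γ i).2 ⟨hγ, hi, hc⟩)
    have hipos : (0 : ℚ) < i := by exact_mod_cast Nat.pos_of_ne_zero hi
    rw [div_le_iff₀ hipos] at hle
    linarith
  · have hipos : (i₀ : ℚ) ≠ 0 := by exact_mod_cast hi₀
    simp only [slope]
    field_simp
    ring

section slope

variable {k A : Type*} [CommSemiring k] [CommRing A] [Algebra k A] {F : ℤ → Submodule k A}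

/-- With the variable given degree `-e`, `φ` does not raise filtration degree. -/
def IsSlopeBound (F : ℤ → Submodule k A) (φ : A →ₐ[k] A[X]) (e : ℚ) : Prop :=
  ∀ (n : ℤ) (a : A), a ∈ F n → ∀ i : ℕ, (φ a).coeff i ∈ F ⌊(n : ℚ) + e * i⌋

theorem coeff_mem_of_mem_closure (hF : IsProperFiltration F) {φ : A →ₐ[k] A[X]}
    (hφ : ∀ a, (φ a).coeff 0 = a) {Γ : Set A} {e : ℚ}
    (he : ∀ γ ∈ Γ, ∀ i ≠ 0, (φ γ).coeff i ≠ 0 →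
      (filtrationDeg F ((φ γ).coeff i) : ℚ) ≤ filtrationDeg F γ + e * i)
    {w : A} (hw : w ∈ Submonoid.closure Γ) (n : ℤ) (hwn : w ∈ F n) (i : ℕ) :
    (φ w).coeff i ∈ F ⌊(n : ℚ) + e * i⌋ := by
  induction hw using Submonoid.closure_induction generalizing n i with
  | mem γ hγ =>
    rcases eq_or_ne i 0 with rfl | hi
    · simpa [hφ] using hwn
    by_cases hc : (φ γ).coeff i = 0
    · simp [hc]
    have hγ0 : γ ≠ 0 := by rintro rfl; simp at hc
    rw [hF.mem_iff_filtrationDeg_le hc, Int.le_floor]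
    have hγn : (filtrationDeg F γ : ℚ) ≤ n := by
      exact_mod_cast (hF.mem_iff_filtrationDeg_le hγ0).1 hwn
    linarith [he γ hγ i hi hc]
  | one =>
    rcases eq_or_ne i 0 with rfl | hi
    · simpa [hφ] using hwn
    · simp [coeff_one, hi]
  | mul x y _ _ ihx ihy =>
    by_cases hx0 : x = 0
    · simp [hx0]
    by_cases hy0 : y = 0
    · simp [hy0]
    have hdeg : ((filtrationDeg F x + filtrationDeg F y : ℤ) : ℚ) ≤ n := by
      rw [← hF.filtrationDeg_mul hx0 hy0]
      exact_mod_cast (hF.mem_iff_filtrationDeg_le (hF.mul_ne_zero hx0 hy0)).1 hwn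
    rw [map_mul, coeff_mul]
    refine sum_mem fun jl hjl => hF.monotone ?_ (hF.mul_mem
      (ihx _ (hF.mem_filtrationDeg x) jl.1) (ihy _ (hF.mem_filtrationDeg y) jl.2))
    rw [Finset.HasAntidiagonal.mem_antidiagonal] at hjl
    calc ⌊(filtrationDeg F x : ℚ) + e * jl.1⌋ + ⌊(filtrationDeg F y : ℚ) + e * jl.2⌋
        ≤ ⌊((filtrationDeg F x : ℚ) + e * jl.1) + ((filtrationDeg F y : ℚ) + e * jl.2)⌋ :=
          Int.le_floor_add _ _
      _ ≤ ⌊(n : ℚ) + e * i⌋ := by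
          refine Int.floor_le_floor ?_
          rw [← hjl]
          push_cast at hdeg ⊢
          linarith

theorem isSlopeBound_of_generators (hF : IsProperFiltration F) {φ : A →ₐ[k] A[X]}
    (hφ : ∀ a, (φ a).coeff 0 = a) {Γ : Finset A} {e : ℚ}
    (hadm : ∀ (n : ℤ), ∀ a ∈ F n,
      a ∈ Submodule.span k ((Submonoid.closure (Γ : Set A) : Set A) ∩ (F n : Set A)))
    (he : ∀ γ ∈ Γ, ∀ i ≠ 0, (φ γ).coeff i ≠ 0 →
      (filtrationDeg F ((φ γ).coeff i) : ℚ) ≤ filtrationDeg F γ + e * i) :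
    IsSlopeBound F φ e := by
  intro n a ha i
  have hspan := hadm n a ha
  clear ha
  induction hspan using Submodule.span_induction with
  | mem x hx => exact coeff_mem_of_mem_closure hF hφ he hx.1 n hx.2 i
  | zero => simp
  | add x y _ _ hx hy => simpa using add_mem hx hy
  | smul c x _ hx => simpa using Submodule.smul_mem _ c hx

end slope

theorem exists_coeff_ne_zero_of_expInv_ne_top {k A : Type*} [CommSemiring k] [CommSemiring A]
    [Algebra k A] {φ : A →ₐ[k] A[X]} (hφ : ∀ a, (φ a).coeff 0 = a) {Γ : Set A}
    (hΓ : Algebra.adjoin k Γ = ⊤) (hnt : expInv φ ≠ ⊤) :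
    ∃ γ ∈ Γ, ∃ i ≠ 0, (φ γ).coeff i ≠ 0 := by
  by_contra! h
  refine hnt (eq_top_iff.2 (hΓ ▸ Algebra.adjoin_le fun γ hγ => ?_))
  show φ γ = C γ
  ext i
  rcases eq_or_ne i 0 with rfl | hi
  · simp [hφ]
  · simp [h γ hγ i hi, coeff_C, hi]

section induced

variable {k A G : Type*} [CommSemiring k] [CommRing A] [Algebra k A] [CommRing G] [Algebra k G]
  {F : ℤ → Submodule k A} {π : ∀ n : ℤ, F n →ₗ[k] G} {φ : A →ₐ[k] A[X]} {e : ℚ} {n m : ℤ}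
  {a b : A}

/-- The image under the induced map of the class of `a` in `F n / F (n - 1)`: its `i`-th
coefficient is the degree-`(n + e i)` part of `(φ a).coeff i`, which vanishes unless
`e i ∈ ℤ`. -/
noncomputable def inducedPoly (F : ℤ → Submodule k A) (π : ∀ n : ℤ, F n →ₗ[k] G)
    (φ : A →ₐ[k] A[X]) (e : ℚ) (n : ℤ) (a : A) : G[X] :=
  ∑ i ∈ (φ a).support, monomial i (gradedPart F π ⌈(n : ℚ) + e * i⌉ ((φ a).coeff i))

theorem coeff_inducedPoly (i : ℕ) :
    (inducedPoly F π φ e n a).coeff i = gradedPart F π ⌈(n : ℚ) + e * i⌉ ((φ a).coeff i) := by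
  simp only [inducedPoly, finsetSum_coeff, coeff_monomial, Finset.sum_ite_eq', mem_support_iff]
  split_ifs with h
  · rfl
  · rw [notMem_support_iff.1 h, gradedPart_zero]

theorem IsSlopeBound.coeff_mem_ceil (h : IsSlopeBound F φ e) (hF : IsProperFiltration F)
    (ha : a ∈ F n) (i : ℕ) : (φ a).coeff i ∈ F ⌈(n : ℚ) + e * i⌉ :=
  hF.monotone (Int.floor_le_ceil _) (h n a ha i)

theorem inducedPoly_add (hF : IsProperFiltration F) (h : IsSlopeBound F φ e) (ha : a ∈ F n)
    (hb : b ∈ F n) :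
    inducedPoly F π φ e n (a + b) = inducedPoly F π φ e n a + inducedPoly F π φ e n b := by
  ext i
  simp only [coeff_add, coeff_inducedPoly, map_add]
  exact gradedPart_add (h.coeff_mem_ceil hF ha i) (h.coeff_mem_ceil hF hb i)

theorem inducedPoly_smul (hF : IsProperFiltration F) (h : IsSlopeBound F φ e) (c : k)
    (ha : a ∈ F n) : inducedPoly F π φ e n (c • a) = c • inducedPoly F π φ e n a := by
  ext i
  simp only [coeff_smul, coeff_inducedPoly, map_smul]
  exact gradedPart_smul c (h.coeff_mem_ceil hF ha i)

theorem inducedPoly_eq_zero_of_mem_sub_one (hF : IsProperFiltration F)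
    (hπ : IsAssociatedGraded F π) (h : IsSlopeBound F φ e) (ha : a ∈ F (n - 1)) :
    inducedPoly F π φ e n a = 0 := by
  ext i
  rw [coeff_inducedPoly, coeff_zero]
  refine gradedPart_ceil_eq_zero hF hπ (h _ a ha i) ?_
  have := Int.floor_le (((n - 1 : ℤ) : ℚ) + e * i)
  push_cast at this ⊢
  linarith

theorem inducedPoly_mul (hF : IsProperFiltration F) (hπ : IsAssociatedGraded F π)
    (h : IsSlopeBound F φ e) (ha : a ∈ F n) (hb : b ∈ F m) :
    inducedPoly F π φ e (n + m) (a * b) = inducedPoly F π φ e n a * inducedPoly F π φ e m b := by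
  ext i
  have hsum : ∀ jl ∈ Finset.HasAntidiagonal.antidiagonal i,
      ((n : ℚ) + e * jl.1) + ((m : ℚ) + e * jl.2) = ((n + m : ℤ) : ℚ) + e * i := by
    intro jl hjl
    rw [← Finset.HasAntidiagonal.mem_antidiagonal.1 hjl]
    push_cast
    ring
  rw [coeff_inducedPoly, coeff_mul, map_mul, coeff_mul, gradedPart_sum]
  · refine Finset.sum_congr rfl fun jl hjl => ?_
    rw [coeff_inducedPoly, coeff_inducedPoly, ← hsum jl hjl]
    exact gradedPart_ceil_add_mul hF hπ (h n a ha _) (h m b hb _)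
  · intro jl hjl
    refine hF.monotone ?_ (hF.mul_mem (h n a ha jl.1) (h m b hb jl.2))
    exact hsum jl hjl ▸ (Int.le_floor_add _ _).trans (Int.floor_le_ceil _)

theorem inducedPoly_of_mem_expInv (hn : a ∈ F n) (ha : a ∈ expInv φ) :
    inducedPoly F π φ e n a = C (π n ⟨a, hn⟩) := by
  have hC : φ a = C a := ha
  ext i
  rw [coeff_inducedPoly, hC, coeff_C, coeff_C]
  split_ifs with hi
  · subst hi
    simp [gradedPart_of_mem hn]
  · exact gradedPart_zero

end induced

section inducedMap

variable {k A G : Type*} [CommRing k] [CommRing A] [Algebra k A] [CommRing G] [Algebra k G]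
  {F : ℤ → Submodule k A} {π : ∀ n : ℤ, F n →ₗ[k] G} {φ : A →ₐ[k] A[X]} {e : ℚ}
  {ψ : G →ₐ[k] G[X]}

theorem exists_algHom_inducedPoly (hF : IsProperFiltration F) (hπ : IsAssociatedGraded F π)
    (h : IsSlopeBound F φ e) :
    ∃ ψ : G →ₐ[k] G[X], ∀ n (a : F n), ψ (π n a) = inducedPoly F π φ e n a := by
  let L : ∀ n, F n →ₗ[k] G[X] := fun n =>
    { toFun := fun a => inducedPoly F π φ e n a
      map_add' := fun a b => inducedPoly_add hF h a.2 b.2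
      map_smul' := fun c a => inducedPoly_smul hF h c a.2 }
  obtain ⟨ψ, hψ⟩ := hπ.isInternal.exists_linearMap_comp_eq L fun n a ha =>
    inducedPoly_eq_zero_of_mem_sub_one hF hπ h ((hπ.map_eq_zero_iff n a).1 ha)
  have hmul (x y : G) : ψ (x * y) = ψ x * ψ y := by
    induction x using hπ.isInternal.induction_on_range generalizing y with
    | zero => simp
    | add x x' hx hx' => rw [add_mul, map_add, map_add, hx, hx', add_mul]
    | image n a =>
      induction y using hπ.isInternal.induction_on_range with
      | zero => simp
      | add y y' hy hy' => rw [mul_add, map_add, map_add, hy, hy', mul_add]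
      | image m b =>
        rw [← hπ.map_mul n m a b (hF.mul_mem a.2 b.2), hψ, hψ, hψ]
        exact inducedPoly_mul hF hπ h a.2 b.2
  have hone : ψ 1 = 1 := by
    rw [← hπ.map_one hF.one_mem, hψ]
    exact (inducedPoly_of_mem_expInv hF.one_mem (one_mem _)).trans (by rw [hπ.map_one, C_1])
  exact ⟨AlgHom.ofLinearMap ψ hone hmul, hψ⟩

theorem coeff_comp_inducedPoly (hF : IsProperFiltration F) (hπ : IsAssociatedGraded F π)
    (hφ : ∀ a (i j : ℕ), (φ ((φ a).coeff i)).coeff j = (i + j).choose i • (φ a).coeff (i + j))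
    (h : IsSlopeBound F φ e) (hψ : ∀ n (a : F n), ψ (π n a) = inducedPoly F π φ e n a)
    {n : ℤ} {a : A} (ha : a ∈ F n) (i j : ℕ) :
    (ψ ((inducedPoly F π φ e n a).coeff i)).coeff j =
      (i + j).choose i • (inducedPoly F π φ e n a).coeff (i + j) := by
  rw [coeff_inducedPoly, coeff_inducedPoly, gradedPart_of_mem (h.coeff_mem_ceil hF ha i), hψ,
    coeff_inducedPoly, hφ, ← gradedPart_nsmul _ (h.coeff_mem_ceil hF ha (i + j))]
  have hmem : (i + j).choose i • (φ a).coeff (i + j) ∈ F ⌊(⌊(n : ℚ) + e * i⌋ : ℚ) + e * j⌋ :=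
    hφ a i j ▸ h _ _ (h n a ha i) j
  by_cases hint : (⌊(n : ℚ) + e * i⌋ : ℚ) = n + e * i
  · have hceil : (⌈(n : ℚ) + e * i⌉ : ℚ) = n + e * i := by rw [← hint, Int.ceil_intCast]
    rw [hceil]
    push_cast
    ring_nf
  -- If `e i ∉ ℤ`, both sides vanish: `hmem` places the coefficient strictly below both degrees.
  have hlt := lt_of_le_of_ne (Int.floor_le ((n : ℚ) + e * i)) hint
  have hle := Int.floor_le ((⌊(n : ℚ) + e * i⌋ : ℚ) + e * j)
  rw [gradedPart_ceil_eq_zero hF hπ hmem, gradedPart_ceil_eq_zero hF hπ hmem]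
  · push_cast
    linarith
  · linarith [Int.le_ceil ((n : ℚ) + e * i)]

theorem isExponentialMap_of_inducedPoly (hF : IsProperFiltration F) (hπ : IsAssociatedGraded F π)
    (hφ : IsExponentialMap φ) (h : IsSlopeBound F φ e)
    (hψ : ∀ n (a : F n), ψ (π n a) = inducedPoly F π φ e n a) : IsExponentialMap ψ := by
  rw [isExponentialMap_iff_coeff] at hφ ⊢
  refine ⟨fun g => ?_, fun g => ?_⟩
  · induction g using hπ.isInternal.induction_on_range with
    | zero => simp
    | add x y hx hy => simp [hx, hy]
    | image n a => simp [hψ, coeff_inducedPoly, hφ.1, gradedPart_of_mem a.2]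
  · induction g using hπ.isInternal.induction_on_range with
    | zero => simp
    | add x y hx hy => intro i j; simp [hx, hy]
    | image n a => rw [hψ]; exact coeff_comp_inducedPoly hF hπ hφ.2 h hψ a.2

theorem expInv_ne_top_of_inducedPoly (hF : IsProperFiltration F) (hπ : IsAssociatedGraded F π)
    (hψ : ∀ n (a : F n), ψ (π n a) = inducedPoly F π φ e n a) {γ : A} {i : ℕ} (hi : i ≠ 0)
    (hc : (φ γ).coeff i ≠ 0)
    (heq : (filtrationDeg F ((φ γ).coeff i) : ℚ) = filtrationDeg F γ + e * i) :
    expInv ψ ≠ ⊤ := by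
  intro htop
  have hmem : π _ ⟨γ, hF.mem_filtrationDeg γ⟩ ∈ expInv ψ := htop ▸ Algebra.mem_top
  have hinv : ψ (π _ ⟨γ, hF.mem_filtrationDeg γ⟩) = C (π _ ⟨γ, hF.mem_filtrationDeg γ⟩) := hmem
  have hcoeff := congrArg (coeff · i) hinv
  simp only [hψ, coeff_inducedPoly, coeff_C_of_ne_zero hi, ← heq, Int.ceil_intCast] at hcoeff
  exact gradedPart_ne_zero hπ (hF.mem_filtrationDeg _) (hF.notMem_filtrationDeg_sub_one hc) hcoeff

end inducedMap

theorem expMap_associatedGraded_general {k A G : Type} [Field k] [CommRing A]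
    [Algebra k A] [CommRing G] [Algebra k G]
    -- a proper `ℤ`-filtration on `A`:
    (F : ℤ → Submodule k A)
    (hmono : ∀ n : ℤ, F n ≤ F (n + 1))
    (hunion : ∀ a : A, ∃ n : ℤ, a ∈ F n)
    (hinter : ∀ a : A, (∀ n : ℤ, a ∈ F n) → a = 0)
    (hmul : ∀ {n m : ℤ} {a b : A}, a ∈ F n → a ∉ F (n - 1) → b ∈ F m → b ∉ F (m - 1) →
      a * b ∈ F (n + m) ∧ a * b ∉ F (n + m - 1))
    -- admissibility:
    (Γ : Finset A) (hΓ : Algebra.adjoin k (Γ : Set A) = ⊤)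
    (hadm : ∀ (n : ℤ), ∀ a ∈ F n,
      a ∈ Submodule.span k ((Submonoid.closure (Γ : Set A) : Set A) ∩ (F n : Set A)))
    -- `G` realizes the associated graded ring `gr(A) = ⊕ₙ Aₙ/Aₙ₋₁`:
    (π : ∀ n : ℤ, F n →ₗ[k] G)
    (hker : ∀ (n : ℤ) (a : F n), π n a = 0 ↔ (a : A) ∈ F (n - 1))
    (hinternal : DirectSum.IsInternal (fun n : ℤ => LinearMap.range (π n)))
    (hone : ∀ h1 : (1 : A) ∈ F 0, π 0 ⟨1, h1⟩ = 1)
    (hmulcomp : ∀ (n m : ℤ) (a : F n) (b : F m) (hab : (a : A) * (b : A) ∈ F (n + m)),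
      π (n + m) ⟨(a : A) * (b : A), hab⟩ = π n a * π m b)
    -- a non-trivial exponential map on `A`:
    (φ : A →ₐ[k] A[X]) (hφ  : IsExponentialMap φ) (hnt : expInv φ ≠ ⊤) :
    ∃ ψ : G →ₐ[k] Polynomial G, IsExponentialMap ψ ∧ expInv ψ ≠ ⊤ ∧
      ∀ (a : A) (n : ℤ) (h : a ∈ F n), a ∉ F (n - 1) → a ∈ expInv φ →
        π n ⟨a, h⟩ ∈ expInv ψ := by
  have hF : IsProperFiltration F := ⟨hmono, hunion, hinter, hmul⟩
  have hπ : IsAssociatedGraded F π := ⟨hker, hinternal, hone, hmulcomp⟩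
  have hφ0 := ((isExponentialMap_iff_coeff φ).1 hφ).1
  obtain ⟨e, he, γ, -, i, hi, hc, heq⟩ := exists_max_slope (filtrationDeg F) φ Γ
    (exists_coeff_ne_zero_of_expInv_ne_top hφ0 hΓ hnt)
  have hslope : IsSlopeBound F φ e := isSlopeBound_of_generators hF hφ0 hadm he
  obtain ⟨ψ, hψ⟩ := exists_algHom_inducedPoly hF hπ hslope
  refine ⟨ψ, isExponentialMap_of_inducedPoly hF hπ hφ hslope hψ,
    expInv_ne_top_of_inducedPoly hF hπ hψ hi hc heq, fun a n h _ ha => ?_⟩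
  exact (hψ n ⟨a, h⟩).trans (inducedPoly_of_mem_expInv h ha)

/-- **Theorem 2.2** (Derksen–Hadas–Makar-Limanov): let `A` be an affine domain over a field
`k` with a proper admissible `ℤ`-filtration `F`, and let `G` (a `k`-algebra) be the
associated graded ring `gr(A) = ⊕ₙ Aₙ/Aₙ₋₁`, realized by surjections `π n : F n → G` with
kernel `F (n-1)`, whose images form an internal direct sum decomposition of `G`, compatibly
with multiplication and the unit.  Then any non-trivial exponential map `φ` on `A` induces a
non-trivial exponential map `ψ` on `gr(A)` whose invariants contain `ρ(A^φ)`, where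
`ρ(a) = π n a` for `a ∈ F n \ F (n-1)`. -/
theorem expMap_associatedGraded {k A G : Type} [Field k] [CommRing A] [IsDomain A]
    [Algebra k A] [Algebra.FiniteType k A] [CommRing G] [Algebra k G]
    -- a proper `ℤ`-filtration on `A`:
    (F : ℤ → Submodule k A)
    (hmono : ∀ n : ℤ, F n ≤ F (n + 1))
    (hunion : ∀ a : A, ∃ n : ℤ, a ∈ F n)
    (hinter : ∀ a : A, (∀ n : ℤ, a ∈ F n) → a = 0)
    (hmul : ∀ {n m : ℤ} {a b : A}, a ∈ F n → a ∉ F (n - 1) → b ∈ F m → b ∉ F (m - 1) →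
      a * b ∈ F (n + m) ∧ a * b ∉ F (n + m - 1))
    -- admissibility:
    (Γ : Finset A) (hΓ : Algebra.adjoin k (Γ : Set A) = ⊤)
    (hadm : ∀ (n : ℤ), ∀ a ∈ F n,
      a ∈ Submodule.span k ((Submonoid.closure (Γ : Set A) : Set A) ∩ (F n : Set A)))
    -- `G` realizes the associated graded ring `gr(A) = ⊕ₙ Aₙ/Aₙ₋₁`:
    (π : ∀ n : ℤ, F n →ₗ[k] G)
    (hker : ∀ (n : ℤ) (a : F n), π n a = 0 ↔ (a : A) ∈ F (n - 1))
    (hinternal : DirectSum.IsInternal (fun n : ℤ => LinearMap.range (π n)))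
    (hone : ∀ h1 : (1 : A) ∈ F 0, π 0 ⟨1, h1⟩ = 1)
    (hmulcomp : ∀ (n m : ℤ) (a : F n) (b : F m) (hab : (a : A) * (b : A) ∈ F (n + m)),
      π (n + m) ⟨(a : A) * (b : A), hab⟩ = π n a * π m b)
    -- a non-trivial exponential map on `A`:
    (φ : A →ₐ[k] A[X]) (hφ  : IsExponentialMap φ) (hnt : expInv φ ≠ ⊤) :
    ∃ ψ : G →ₐ[k] Polynomial G, IsExponentialMap ψ ∧ expInv ψ ≠ ⊤ ∧
      ∀ (a : A) (n : ℤ) (h : a ∈ F n), a ∉ F (n - 1) → a ∈ expInv φ →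
        π n ⟨a, h⟩ ∈ expInv ψ :=
  expMap_associatedGraded_general F hmono hunion hinter hmul Γ hΓ hadm π hker hinternal hone
    hmulcomp φ hφ hnt
end

section
/- Let B be an affine integral domain over an infinite field k and let f ∈ B be such that f − λ is a prime element of B for infinitely many λ ∈ k. Let φ be a non-trivial exponential map on B with f ∈ B^φ. Then there exists β ∈ k such that f − β is a prime element of B and φ induces a non-trivial exponential map on the quotient ring B/(f − β). -/
open Polynomial

/-- **Lemma 3.3**: let `B` be an affine domain over an infinite field `k` and `f ∈ B` such that
`f - λ` is prime for infinitely many `λ ∈ k`.  If `φ` is a non-trivial exponential map on `B`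
with `f ∈ B^φ`, then for some `β ∈ k` the element `f - β` is prime and `φ` induces a
non-trivial exponential map on `B/(f - β)`. -/
theorem expMap_descends_to_fiber {k B : Type} [Field k] [Infinite k] [CommRing B] [IsDomain B]
    [Algebra k B] [Algebra.FiniteType k B] (f : B)
    (hprime : {lam : k | Prime (f - algebraMap k B lam)}.Infinite)
    (φ : B →ₐ[k] B[X]) (hφ : IsExponentialMap φ) (hnt : expInv φ ≠ ⊤)
    (hf : f ∈ expInv φ) :
    ∃ β : k, Prime (f - algebraMap k B β) ∧
      ∃ ψ : (B ⧸ Ideal.span {f - algebraMap k B β}) →ₐ[k]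
          Polynomial (B ⧸ Ideal.span {f - algebraMap k B β}),
        IsExponentialMap ψ ∧
        (∀ b : B, ψ (Ideal.Quotient.mk (Ideal.span {f - algebraMap k B β}) b) =
          (φ b).map (Ideal.Quotient.mk (Ideal.span {f - algebraMap k B β}))) ∧
        expInv ψ ≠ ⊤ := by
  classical
  have hb : ∃ b : B, φ b ≠ C b := by
    by_contra h
    push_neg at h
    exact hnt (eq_top_iff.mpr fun x _ => h x)
  obtain ⟨b, hb⟩ := hb
  have hcoeff0 : ∀ a : B, (φ a).coeff 0 = a := fun a => by
    rw [coeff_zero_eq_eval_zero]; exact hφ.1 a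
  have hn : ∃ n : ℕ, n ≠ 0 ∧ (φ b).coeff n ≠ 0 := by
    by_contra h
    push_neg at h
    apply hb
    ext m
    rcases eq_or_ne m 0 with rfl | hm
    · simp [hcoeff0]
    · rw [h m hm, coeff_C, if_neg hm]
  obtain ⟨n, hn0, hg⟩ := hn
  set g := (φ b).coeff n with hgdef
  have hgne : g ≠ 0 := hg
  -- Step 2: find β with f - β prime not dividing g
  have key : ∃ β : k, Prime (f - algebraMap k B β) ∧ ¬ (f - algebraMap k B β ∣ g) := by
    by_contra h
    push_neg at h
    have hNoeth : IsNoetherianRing B := Algebra.FiniteType.isNoetherianRing k B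
    let e := hprime.natEmbedding
    let p : ℕ → B := fun i => f - algebraMap k B (e i : k)
    have hp : ∀ i, Prime (p i) := fun i => (e i).2
    have hpd : ∀ i, p i ∣ g := fun i => h _ ((e i).2)
    have hpne : ∀ i j, p i ∣ p j → i = j := by
      intro i j hij
      by_contra hne
      have hkne : (e i : k) ≠ (e j : k) := fun hk => hne (e.injective (Subtype.ext hk))
      have hd : p i ∣ algebraMap k B ((e i : k) - (e j : k)) := by
        have heq : algebraMap k B ((e i : k) - (e j : k)) = p j - p i := by
          simp only [p, map_sub]; ring
        rw [heq]; exact dvd_sub hij dvd_rfl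
      have hu : IsUnit (algebraMap k B ((e i : k) - (e j : k))) :=
        (isUnit_iff_ne_zero.mpr (sub_ne_zero.mpr hkne)).map (algebraMap k B)
      exact (hp i).not_unit (isUnit_of_dvd_unit hd hu)
    have hprod : ∀ m, (∏ i ∈ Finset.range m, p i) ∣ g := by
      intro m
      induction m with
      | zero => simp
      | succ m ih =>
        obtain ⟨c, hc⟩ := ih
        have hpmc : p m ∣ c := by
          rcases (hp m).2.2 _ _ (hc ▸ hpd m) with h' | h'
          · exfalso
            obtain ⟨i, hi, hdvd⟩ := ((hp m).dvd_finset_prod_iff _).1 h'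
            have := hpne m i hdvd
            rw [Finset.mem_range] at hi
            omega
          · exact h'
        obtain ⟨d, hd⟩ := hpmc
        exact ⟨d, by rw [Finset.prod_range_succ, hc, hd]; ring⟩
    choose c hc using hprod
    have hpn0 : ∀ m, (∏ i ∈ Finset.range m, p i) ≠ 0 := fun m =>
      Finset.prod_ne_zero_iff.mpr fun i _ => (hp i).ne_zero
    have hstep : ∀ m, c m = c (m + 1) * p m := by
      intro m
      apply mul_left_cancel₀ (hpn0 m)
      rw [← hc m]
      calc g = (∏ i ∈ Finset.range (m + 1), p i) * c (m + 1) := hc (m + 1)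
        _ = _ := by rw [Finset.prod_range_succ]; ring
    have hcne : ∀ m, c m ≠ 0 := by
      intro m h0
      exact hgne (by rw [hc m, h0, mul_zero])
    obtain ⟨x, ⟨m, rfl⟩, hmin⟩ :=
      (wellFounded_dvdNotUnit (α := B)).has_min (Set.range c) ⟨c 0, 0, rfl⟩
    exact hmin (c (m + 1)) ⟨m + 1, rfl⟩ ⟨hcne (m + 1), p m, (hp m).not_unit, hstep m⟩
  obtain ⟨β, hβprime, hβnd⟩ := key
  set P : B := f - algebraMap k B β with hPdef
  set I : Ideal B := Ideal.span {P} with hIdef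
  have hfinv : φ f = C f := hf
  have hPinv : φ P = C P := by
    rw [hPdef, map_sub, hfinv, AlgHom.commutes, Polynomial.algebraMap_apply, ← C_sub]
  let mk := Ideal.Quotient.mk I
  let F : B →ₐ[k] (B ⧸ I)[X] :=
    (Polynomial.mapAlgHom (Ideal.Quotient.mkₐ k I)).comp φ
  have hF : ∀ a : B, F a = (φ a).map mk := fun a => rfl
  have hF0 : ∀ a ∈ I, F a = 0 := by
    intro a ha
    rw [hIdef, Ideal.mem_span_singleton] at ha
    obtain ⟨d, rfl⟩ := ha
    rw [map_mul, hF, hPinv, Polynomial.map_C]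
    have : mk P = 0 := Ideal.Quotient.eq_zero_iff_mem.mpr
      (Ideal.subset_span (Set.mem_singleton _))
    rw [this, map_zero, zero_mul]
  let ψ : (B ⧸ I) →ₐ[k] (B ⧸ I)[X] := Ideal.Quotient.liftₐ I F hF0
  have hψ : ∀ a : B, ψ (mk a) = (φ a).map mk := fun a => by
    rw [show ψ (mk a) = F a from ?_]
    · exact hF a
    · exact congrArg (fun G => G a) (Ideal.Quotient.liftₐ_comp I F hF0) ▸
        (Ideal.Quotient.liftₐ_apply I F hF0 (mk a)).trans (Ideal.Quotient.lift_mk I _ hF0)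
  refine ⟨β, hβprime, ψ, ⟨?_, ?_⟩, hψ, ?_⟩
  · intro a
    obtain ⟨x, rfl⟩ := Ideal.Quotient.mk_surjective a
    rw [hψ, eval_zero_map, hφ.1]
  · intro a
    obtain ⟨x, rfl⟩ := Ideal.Quotient.mk_surjective a
    rw [hψ]
    have hcomp : (ψ : (B ⧸ I) →+* (B ⧸ I)[X]).comp mk =
        (mapRingHom mk).comp (φ : B →+* B[X]) := RingHom.ext fun a => by
      simp only [RingHom.comp_apply, AlgHom.coe_toRingHom, coe_mapRingHom]
      exact hψ a
    rw [map_map, hcomp, ← map_map]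
    rw [hφ.2 x]
    rw [show ((φ x).eval₂ ((C : B[X] →+* B[X][X]).comp C) (C X + X)).map
        (mapRingHom mk) = (mapRingHom (mapRingHom mk))
        ((φ x).eval₂ ((C : B[X] →+* B[X][X]).comp C) (C X + X)) from rfl]
    rw [hom_eval₂, eval₂_map]
    congr 1
    · ext a
      simp
    · simp
  · intro htop
    have hmem : mk b ∈ expInv ψ := htop ▸ Algebra.mem_top
    have heq : ψ (mk b) = C (mk b) := hmem
    have hcn := congrArg (fun q => q.coeff n) heq
    simp only [hψ, coeff_map, coeff_C, if_neg hn0] at hcn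
    exact hβnd (Ideal.mem_span_singleton.mp (Ideal.Quotient.eq_zero_iff_mem.mp hcn))
end

section
/- Let k be a field, m > 1 an integer, g ∈ k[Z,T], and B = k[X,Y,Z,T]/(X^m Y − g). Let f be a prime element of k[Z,T] such that g ∉ f·k[Z,T]. Then D = B/fB is an integral domain. -/
open Polynomial

/-!
Modulo `f`, the ring becomes `A[X, Y]/(XᵐY - a)` with `A = k[Z,T]/(f)` a domain and
`a = ḡ ≠ 0`, so it suffices that `XᵐY - a` generates the kernel of `X ↦ X, Y ↦ a / Xᵐ` into
the domain `A[X, 1/X]`. Modulo `XᵐY - a`, a power of `X` times any polynomial is a polynomial in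
`X` alone, on which this map is injective; and `X` is a non-zero-divisor modulo `XᵐY - a`,
because `XᵐY - a` has nonzero constant term as a polynomial in `X`.
-/

theorem Ideal.Quotient.isDomain_quotient_span_mk {R : Type*} [CommRing R] {I : Ideal R} {a : R}
    [(I ⊔ Ideal.span {a}).IsPrime] :
    IsDomain ((R ⧸ I) ⧸ Ideal.span {Ideal.Quotient.mk I a}) := by
  rw [← Set.image_singleton, ← Ideal.map_span]
  exact (DoubleQuot.quotQuotEquivQuotSup I _).toMulEquiv.isDomain _

theorem Polynomial.dvd_of_dvd_X_mul {R : Type*} [CommRing R] [IsDomain R] {h u : R[X]}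
    (h0 : h.coeff 0 ≠ 0) (hu : h ∣ X * u) : h ∣ u := by
  obtain ⟨w, hw⟩ := hu
  obtain ⟨w', rfl⟩ : X ∣ w :=
    (prime_X.dvd_or_dvd ⟨u, hw.symm⟩).resolve_left (mt X_dvd_iff.mp h0)
  exact ⟨w', mul_left_cancel₀ X_ne_zero (by rw [hw]; ring)⟩

theorem Polynomial.dvd_of_dvd_X_pow_mul {R : Type*} [CommRing R] [IsDomain R] {h u : R[X]}
    (h0 : h.coeff 0 ≠ 0) (n : ℕ) (hu : h ∣ X ^ n * u) : h ∣ u := by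
  induction n with
  | zero => simpa using hu
  | succ n ih => exact ih (dvd_of_dvd_X_mul h0 (by rwa [← mul_assoc, ← pow_succ']))

namespace FiberRing

variable {A : Type*} [CommRing A]

/-- `X ^ m * Y - a` in `A[Y][X]`: the outer variable is `X`, and `Y` is `C X`. -/
noncomputable def fiberRel (m : ℕ) (a : A) : A[X][X] := X ^ m * C X - C (C a)

theorem coeff_zero_fiberRel_ne_zero [IsDomain A] (m : ℕ) {a : A} (ha : a ≠ 0) :
    (fiberRel m a).coeff 0 ≠ 0 := by
  rcases m.eq_zero_or_pos with rfl | hm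
  · simpa [fiberRel] using X_sub_C_ne_zero a
  · simpa [fiberRel, coeff_X_pow, hm.ne] using ha

def IsClearable (m : ℕ) (a : A) (p : A[X][X]) : Prop :=
  ∃ (N : ℕ) (r : A[X]), fiberRel m a ∣ X ^ N * p - r.map C

theorem isClearable_map_C (m : ℕ) (a : A) (r : A[X]) : IsClearable m a (r.map C) :=
  ⟨0, r, by simp⟩

theorem isClearable_C_X (m : ℕ) (a : A) : IsClearable m a (C X) :=
  ⟨m, C a, ⟨1, by simp [fiberRel]⟩⟩

theorem IsClearable.add {m : ℕ} {a : A} {p q : A[X][X]} :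
    IsClearable m a p → IsClearable m a q → IsClearable m a (p + q) := by
  rintro ⟨N₁, r₁, h₁⟩ ⟨N₂, r₂, h₂⟩
  refine ⟨N₁ + N₂, X ^ N₂ * r₁ + X ^ N₁ * r₂, ?_⟩
  convert dvd_add (h₁.mul_left (X ^ N₂)) (h₂.mul_left (X ^ N₁)) using 1
  simp only [Polynomial.map_add, Polynomial.map_mul, Polynomial.map_pow, map_X]
  ring

theorem IsClearable.mul {m : ℕ} {a : A} {p q : A[X][X]} :
    IsClearable m a p → IsClearable m a q → IsClearable m a (p * q) := by
  rintro ⟨N₁, r₁, h₁⟩ ⟨N₂, r₂, h₂⟩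
  refine ⟨N₁ + N₂, r₁ * r₂, ?_⟩
  convert dvd_add (h₁.mul_left (X ^ N₂ * q)) (h₂.mul_left (r₁.map C)) using 1
  simp only [Polynomial.map_mul]
  ring

theorem isClearable (m : ℕ) (a : A) (p : A[X][X]) : IsClearable m a p := by
  have hX : IsClearable m a X := by simpa using isClearable_map_C m a X
  have hC : ∀ c : A[X], IsClearable m a (C c) := by
    intro c
    induction c using Polynomial.induction_on with
    | C b => simpa using isClearable_map_C m a (C b)
    | add c d hc hd => simpa using hc.add hd
    | monomial n b hc => simpa [pow_succ, ← mul_assoc] using hc.mul (isClearable_C_X m a)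
  induction p using Polynomial.induction_on with
  | C c => exact hC c
  | add p q hp hq => exact hp.add hq
  | monomial n c hp => simpa [pow_succ, ← mul_assoc] using hp.mul hX

noncomputable def fiberEval (m : ℕ) (a : A) : A[X][X] →+* Localization.Away (X : A[X]) :=
  eval₂RingHom
    (eval₂RingHom ((algebraMap A[X] _).comp C)
      (algebraMap A[X] _ (C a) * IsLocalization.Away.invSelf (X : A[X]) ^ m))
    (algebraMap A[X] _ X)

theorem fiberEval_fiberRel (m : ℕ) (a : A) : fiberEval m a (fiberRel m a) = 0 := by
  simp only [fiberRel, fiberEval, coe_eval₂RingHom, eval₂_sub, eval₂_mul, eval₂_X_pow, eval₂_C,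
    eval₂_X, RingHom.comp_apply]
  rw [mul_left_comm, ← mul_pow, IsLocalization.Away.mul_invSelf, one_pow, mul_one, sub_self]

theorem fiberEval_map_C (m : ℕ) (a : A) (r : A[X]) :
    fiberEval m a (r.map C) = algebraMap A[X] _ r := by
  simp only [fiberEval, coe_eval₂RingHom, eval₂_map]
  conv_rhs => rw [← r.eval₂_C_X, hom_eval₂]
  congr 1
  ext b
  simp

theorem ker_fiberEval [IsDomain A] (m : ℕ) {a : A} (ha : a ≠ 0) :
    RingHom.ker (fiberEval m a) = Ideal.span {fiberRel m a} := by
  have hX : Submonoid.powers (X : A[X]) ≤ nonZeroDivisors A[X] :=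
    powers_le_nonZeroDivisors_of_noZeroDivisors X_ne_zero
  refine le_antisymm (fun p hp => ?_) ?_
  · obtain ⟨N, r, hr⟩ := isClearable m a p
    have hr0 : r = 0 := by
      apply IsLocalization.injective (Localization.Away (X : A[X])) hX
      obtain ⟨q, hq⟩ := hr
      have := congrArg (fiberEval m a) hq
      rw [map_sub, map_mul, RingHom.mem_ker.mp hp, mul_zero, zero_sub, map_mul,
        fiberEval_fiberRel, zero_mul, neg_eq_zero, fiberEval_map_C] at this
      rw [this, map_zero]
    rw [hr0, Polynomial.map_zero, sub_zero] at hr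
    exact Ideal.mem_span_singleton.mpr
      (dvd_of_dvd_X_pow_mul (coeff_zero_fiberRel_ne_zero m ha) N hr)
  · rw [Ideal.span_le, Set.singleton_subset_iff]
    exact fiberEval_fiberRel m a

theorem isPrime_span_fiberRel [IsDomain A] (m : ℕ) {a : A} (ha : a ≠ 0) :
    (Ideal.span {fiberRel m a}).IsPrime := by
  have : IsDomain (Localization.Away (X : A[X])) :=
    IsLocalization.isDomain_localization (powers_le_nonZeroDivisors_of_noZeroDivisors X_ne_zero)
  rw [← ker_fiberEval m ha]
  exact RingHom.ker_isPrime _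

theorem comap_mapRingHom_span_fiberRel {R S : Type*} [CommRing R] [CommRing S] {φ : R →+* S}
    (hφ : Function.Surjective φ) (m : ℕ) (g : R) :
    (Ideal.span {fiberRel m (φ g)}).comap (mapRingHom (mapRingHom φ)) =
      Ideal.span {fiberRel m g} ⊔ ((RingHom.ker φ).map C).map C := by
  have hrel : mapRingHom (mapRingHom φ) (fiberRel m g) = fiberRel m (φ g) := by
    simp [fiberRel]
  rw [← hrel, ← Set.image_singleton, ← Ideal.map_span,
    Ideal.comap_map_of_surjective' _ (map_surjective _ (map_surjective _ hφ)),
    ker_mapRingHom, ker_mapRingHom]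

theorem isPrime_span_fiberRel_sup_span_C_C {R : Type*} [CommRing R] (m : ℕ) {f g : R}
    (hf : Prime f) (hfg : ¬ f ∣ g) :
    (Ideal.span {fiberRel m g} ⊔ Ideal.span {C (C f)}).IsPrime := by
  have : (Ideal.span {f}).IsPrime := (Ideal.span_singleton_prime hf.ne_zero).mpr hf
  have hg : Ideal.Quotient.mk (Ideal.span {f}) g ≠ 0 := by
    rwa [Ne, Ideal.Quotient.eq_zero_iff_mem, Ideal.mem_span_singleton]
  have := (isPrime_span_fiberRel m hg).comap (mapRingHom (mapRingHom (Ideal.Quotient.mk _)))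
  rwa [comap_mapRingHom_span_fiberRel Ideal.Quotient.mk_surjective, Ideal.mk_ker,
    Ideal.map_span, Ideal.map_span, Set.image_singleton, Set.image_singleton] at this

open MvPolynomial in
/-- `R[X₀, X₁, …, X_{n+1}] ≅ R[X₂, …, X_{n+1}][X₁][X₀]`. -/
noncomputable def splitTwoVars (R : Type*) [CommRing R] (n : ℕ) :
    MvPolynomial (Fin (n + 2)) R ≃ₐ[R] (MvPolynomial (Fin n) R)[X][X] :=
  (finSuccEquiv R (n + 1)).trans (mapAlgEquiv (finSuccEquiv R n))

section splitTwoVars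

open MvPolynomial

variable {R : Type*} [CommRing R] {n : ℕ}

theorem splitTwoVars_X_zero : splitTwoVars R n (X 0) = Polynomial.X := by
  rw [splitTwoVars, AlgEquiv.trans_apply, finSuccEquiv_X_zero (n := n + 1)]
  simp

theorem splitTwoVars_X_one : splitTwoVars R n (X 1) = Polynomial.C Polynomial.X := by
  rw [splitTwoVars, AlgEquiv.trans_apply, show (1 : Fin (n + 2)) = Fin.succ 0 from rfl,
    finSuccEquiv_X_succ]
  simp [finSuccEquiv_X_zero]

theorem splitTwoVars_rename_addNat (q : MvPolynomial (Fin n) R) :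
    splitTwoVars R n (rename (Fin.addNat · 2) q) = Polynomial.C (Polynomial.C q) := by
  induction q using MvPolynomial.induction_on with
  | C a => simp [splitTwoVars, finSuccEquiv_apply]
  | add p q hp hq => simp [hp, hq]
  | mul_X p i hp =>
    rw [map_mul, map_mul, hp, rename_X, show i.addNat 2 = i.succ.succ from rfl, splitTwoVars,
      AlgEquiv.trans_apply, finSuccEquiv_X_succ]
    simp [finSuccEquiv_X_succ]

theorem isPrime_span_X_pow_mul_X_sub_sup_span (m : ℕ) {f g : MvPolynomial (Fin n) R}
    (hf : Prime f) (hfg : ¬ f ∣ g) :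
    (Ideal.span {X 0 ^ m * X 1 - rename (Fin.addNat · 2) g} ⊔
      Ideal.span {rename (Fin.addNat · 2) f} : Ideal (MvPolynomial (Fin (n + 2)) R)).IsPrime := by
  rw [← Ideal.comap_map_of_bijective _ (splitTwoVars R n).bijective (I := _ ⊔ _), Ideal.map_sup,
    Ideal.map_span, Ideal.map_span, Set.image_singleton, Set.image_singleton]
  simp only [map_sub, map_mul, map_pow, splitTwoVars_X_zero, splitTwoVars_X_one,
    splitTwoVars_rename_addNat]
  exact Ideal.comap_isPrime _ _ (H := isPrime_span_fiberRel_sup_span_C_C m hf hfg)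

end splitTwoVars

end FiberRing

/-- **Lemma 3.4(i)**: for `B = k[X,Y,Z,T]/(XᵐY - g)` with `m > 1`, `g ∈ k[Z,T]`, and `f` a
prime element of `k[Z,T]` not dividing `g`, the ring `D = B/fB` is an integral domain.
Variables: `X = X 0`, `Y = X 1`, `Z = X 2`, `T = X 3`; `k[Z,T]` is embedded in `k[X,Y,Z,T]`
by `Z ↦ X 2`, `T ↦ X 3`. -/
theorem fiber_ring_is_domain (k : Type) [Field k] (m : ℕ)
    (g f : MvPolynomial (Fin 2) k) (hf : Prime f) (hfg : ¬ f ∣ g) :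
    let ι : MvPolynomial (Fin 2) k →ₐ[k] MvPolynomial (Fin 4) k :=
      MvPolynomial.rename (fun i : Fin 2 => (⟨(i : ℕ) + 2, by omega⟩ : Fin 4))
    let I : Ideal (MvPolynomial (Fin 4) k) :=
      Ideal.span {MvPolynomial.X 0 ^ m * MvPolynomial.X 1 - ι g}
    let B := MvPolynomial (Fin 4) k ⧸ I
    IsDomain (B ⧸ Ideal.span {Ideal.Quotient.mk I (ι f)}) := by
  intro ι I B
  have : (I ⊔ Ideal.span {ι f}).IsPrime :=
    FiberRing.isPrime_span_X_pow_mul_X_sub_sup_span m hf hfg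
  exact Ideal.Quotient.isDomain_quotient_span_mk
end
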